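/- Simulation lemma (first form): For an MDP with finite state space S, finite action space A, discount γ ∈ [0,1), initial distribution d_0, two transition kernels P and P', reward r and bonus b, and any stationary policy π, the difference of values satisfies V^π_{P',r+b} − V^π_{P,r} = (1/(1−γ)) E_{(s,a)∼d^π_{P'}}[ b(s,a) + γ E_{s'∼P'(·|s,a)} Q^π_{P,r}(s',π) − γ E_{s'∼P(·|s,a)} Q^π_{P,r}(s',π) ], where Q(s',π) := E_{a'∼π(s')} Q(s',a') and d^π_{P'} is the discounted state-action occupancy of π under P'. -/
import Mathlib


/-- Simulation lemma (first form). State-action value functions `Q` (for `(P, r)`) and `Q'`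
(for `(P', r + b)`) are characterized by their Bellman equations, and `dπ` is the discounted
state-action occupancy of `π` under `P'`, characterized by its flow equation. Then
`V^π_{P',r+b} - V^π_{P,r} = (1/(1-γ)) E_{(s,a)∼dπ}[ b(s,a)
  + γ E_{s'∼P'(·|s,a)} Q^π_{P,r}(s',π) - γ E_{s'∼P(·|s,a)} Q^π_{P,r}(s',π) ]`. -/
theorem stmt6 {S A : Type*} [Fintype S] [Fintype A]
    (γ : ℝ) (hγ0 : 0 ≤ γ) (hγ1 : γ < 1)
    (d0 : S → ℝ) (hd00 : ∀ s, 0 ≤ d0 s) (hd01 : ∑ s, d0 s = 1)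
    (P P' : S → A → S → ℝ)
    (hP0 : ∀ s a s', 0 ≤ P s a s') (hP1 : ∀ s a, ∑ s', P s a s' = 1)
    (hP'0 : ∀ s a s', 0 ≤ P' s a s') (hP'1 : ∀ s a, ∑ s', P' s a s' = 1)
    (r b : S → A → ℝ)
    (π : S → A → ℝ) (hπ0 : ∀ s a, 0 ≤ π s a) (hπ1 : ∀ s, ∑ a, π s a = 1)
    (Q Q' : S → A → ℝ)
    (hQ : ∀ s a, Q s a = r s a + γ * ∑ s', P s a s' * ∑ a', π s' a' * Q s' a')
    (hQ' : ∀ s a, Q' s a = r s a + b s a + γ * ∑ s', P' s a s' * ∑ a', π s' a' * Q' s' a')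
    (dπ : S → A → ℝ)
    (hflow : ∀ s a, dπ s a
      = (1 - γ) * d0 s * π s a + γ * π s a * ∑ t, ∑ u, dπ t u * P' t u s) :
    (∑ s, d0 s * ∑ a, π s a * Q' s a) - (∑ s, d0 s * ∑ a, π s a * Q s a)
      = (1 / (1 - γ)) * ∑ s, ∑ a, dπ s a *
          (b s a + γ * (∑ s', P' s a s' * ∑ a', π s' a' * Q s' a')
            - γ * (∑ s', P s a s' * ∑ a', π s' a' * Q s' a')) := by
  have hγ : (1 - γ) ≠ 0 := by linarith
  set Vf : S → ℝ := fun s => ∑ a, π s a * (Q' s a - Q s a) with hVf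
  set mf : S → ℝ := fun s => ∑ t, ∑ u, dπ t u * P' t u s with hmf
  have hVsub : ∀ s', Vf s'
      = (∑ a', π s' a' * Q' s' a') - (∑ a', π s' a' * Q s' a') := by
    intro s'
    rw [hVf, ← Finset.sum_sub_distrib]
    exact Finset.sum_congr rfl fun a' _ => by ring
  have hf : ∀ s a,
      b s a + γ * (∑ s', P' s a s' * ∑ a', π s' a' * Q s' a')
        - γ * (∑ s', P s a s' * ∑ a', π s' a' * Q s' a')
      = (Q' s a - Q s a) - γ * ∑ s', P' s a s' * Vf s' := by
    intro s a
    have e1 : Q' s a - Q s a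
        = b s a + γ * (∑ s', P' s a s' * ∑ a', π s' a' * Q' s' a')
          - γ * (∑ s', P s a s' * ∑ a', π s' a' * Q s' a') := by
      rw [hQ' s a, hQ s a]; ring
    have e2 : ∑ s', P' s a s' * Vf s'
        = (∑ s', P' s a s' * ∑ a', π s' a' * Q' s' a')
          - ∑ s', P' s a s' * ∑ a', π s' a' * Q s' a' := by
      rw [← Finset.sum_sub_distrib]
      exact Finset.sum_congr rfl fun s' _ => by rw [hVsub s']; ring
    rw [e1, e2]; ring
  have hA : ∑ s, ∑ a, dπ s a * (Q' s a - Q s a)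
      = (1 - γ) * (∑ s, d0 s * Vf s) + γ * ∑ s, mf s * Vf s := by
    rw [Finset.mul_sum, Finset.mul_sum, ← Finset.sum_add_distrib]
    apply Finset.sum_congr rfl; intro s _
    simp only [hVf, Finset.mul_sum, ← Finset.sum_add_distrib]
    apply Finset.sum_congr rfl; intro a _
    rw [hflow s a]; ring
  have hB : ∑ s, ∑ a, dπ s a * ∑ s', P' s a s' * Vf s' = ∑ s', mf s' * Vf s' := by
    have step : ∀ s a, dπ s a * ∑ s', P' s a s' * Vf s'
        = ∑ s', dπ s a * P' s a s' * Vf s' := by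
      intro s a; rw [Finset.mul_sum]
      exact Finset.sum_congr rfl fun s' _ => by ring
    simp only [step]
    calc ∑ s, ∑ a, ∑ s', dπ s a * P' s a s' * Vf s'
        = ∑ s, ∑ s', ∑ a, dπ s a * P' s a s' * Vf s' :=
          Finset.sum_congr rfl fun s _ => Finset.sum_comm
      _ = ∑ s', ∑ s, ∑ a, dπ s a * P' s a s' * Vf s' := Finset.sum_comm
      _ = ∑ s', mf s' * Vf s' := by
          apply Finset.sum_congr rfl; intro s' _
          rw [hmf, Finset.sum_mul]
          apply Finset.sum_congr rfl; intro s _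
          rw [Finset.sum_mul]
  have key : ∑ s, ∑ a, dπ s a *
        (b s a + γ * (∑ s', P' s a s' * ∑ a', π s' a' * Q s' a')
          - γ * (∑ s', P s a s' * ∑ a', π s' a' * Q s' a'))
      = (1 - γ) * ∑ s, d0 s * Vf s := by
    have e3 : ∑ s, ∑ a, dπ s a *
          (b s a + γ * (∑ s', P' s a s' * ∑ a', π s' a' * Q s' a')
            - γ * (∑ s', P s a s' * ∑ a', π s' a' * Q s' a'))
        = (∑ s, ∑ a, dπ s a * (Q' s a - Q s a))
          - γ * ∑ s, ∑ a, dπ s a * ∑ s', P' s a s' * Vf s' := by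
      rw [Finset.mul_sum, ← Finset.sum_sub_distrib]
      apply Finset.sum_congr rfl; intro s _
      rw [Finset.mul_sum, ← Finset.sum_sub_distrib]
      apply Finset.sum_congr rfl; intro a _
      rw [hf s a]; ring
    rw [e3, hA, hB]; ring
  rw [key, ← mul_assoc, one_div, inv_mul_cancel₀ hγ, one_mul, ← Finset.sum_sub_distrib]
  apply Finset.sum_congr rfl; intro s _
  rw [← mul_sub]
  congr 1
  rw [hVsub s]
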